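/- Let (Ω, ℙ) be a probability space, a : Ω → ℝⁿ a random vector and δ : Ω → ℝ a random variable such that δ², δ² aₖ and δ² aₖ aⱼ are integrable for all indices k, j, and additionally each aₖ is integrable. Set c = E[δ²], bₖ = E[δ² aₖ], Aₖⱼ = E[δ² aₖ aⱼ], νₖ = E[aₖ], and assume the block matrix F = [[A, b],[bᵀ, c]] is positive definite. Define μ_q = c⁻¹ b, V_q = c⁻¹ A − μ_q μ_qᵀ, s = (c − bᵀ A⁻¹ b)⁻¹, and k = 1 + (μ_q − ν)ᵀ V_q⁻¹ μ_q. Then the mean correction term satisfies s · (1 − νᵀ A⁻¹ b) · b = k · μ_q. -/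

import Mathlib

open Matrix MeasureTheory

lemma vecMulVec_mulVec' {n : ℕ} (v w u : Fin n → ℝ) :
    Matrix.vecMulVec v w *ᵥ u = (w ⬝ᵥ u) • v := by
  funext i
  simp only [Matrix.mulVec, Matrix.vecMulVec_apply, dotProduct, Pi.smul_apply,
    smul_eq_mul, Finset.sum_mul]
  exact Finset.sum_congr rfl fun j _ => by ring

lemma quad_form_block {n : ℕ} (A : Matrix (Fin n) (Fin n) ℝ) (b : Fin n → ℝ) (c : ℝ)
    (u : Fin n → ℝ) (t : ℝ) :
    (Sum.elim u (fun _ : Unit => t)) ⬝ᵥ ((Matrix.fromBlocks A (Matrix.replicateCol Unit b)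
        (Matrix.replicateRow Unit b) (Matrix.of fun _ _ : Unit => c)) *ᵥ Sum.elim u (fun _ : Unit => t))
      = u ⬝ᵥ (A *ᵥ u) + t * (b ⬝ᵥ u) + t * (u ⬝ᵥ b) + c * t^2 := by
  simp [fromBlocks_mulVec, sumElim_dotProduct_sumElim, mulVec, dotProduct, replicateCol, replicateRow,
    Finset.mul_sum, Finset.sum_add_distrib, mul_add, add_mul]
  ring_nf


/-- Theorem 2 of the paper (mean correction term): with `c = E[δ²]`,
`bₖ = E[δ² aₖ]`, `Aₖⱼ = E[δ² aₖ aⱼ]`, `νₖ = E[aₖ]`, positive definite Fisher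
matrix `F = [[A, b],[bᵀ, c]]`, `μ_q = c⁻¹ b`, `V_q = c⁻¹ A − μ_q μ_qᵀ`,
`s = (c − bᵀ A⁻¹ b)⁻¹` and `k = 1 + (μ_q − ν)ᵀ V_q⁻¹ μ_q`, the mean
correction term satisfies `s (1 − νᵀ A⁻¹ b) b = k μ_q`. -/
theorem mean_correction_term (n : ℕ) (Ω : Type*) [MeasureSpace Ω]
    [IsProbabilityMeasure (volume : Measure Ω)]
    (a : Ω → Fin n → ℝ) (δ : Ω → ℝ)
    (hδ : Integrable (fun ω => δ ω ^ 2))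
    (hδa : ∀ k, Integrable (fun ω => δ ω ^ 2 * a ω k))
    (hδaa : ∀ k j, Integrable (fun ω => δ ω ^ 2 * a ω k * a ω j))
    (ha : ∀ k, Integrable (fun ω => a ω k))
    (c : ℝ) (hc : c = ∫ ω, δ ω ^ 2)
    (b : Fin n → ℝ) (hb : b = fun k => ∫ ω, δ ω ^ 2 * a ω k)
    (A : Matrix (Fin n) (Fin n) ℝ)
    (hA : A = Matrix.of fun k j => ∫ ω, δ ω ^ 2 * a ω k * a ω j)
    (ν : Fin n → ℝ) (hν : ν = fun k => ∫ ω, a ω k)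
    (hF : (Matrix.fromBlocks A (Matrix.replicateCol Unit b) (Matrix.replicateRow Unit b)
            (Matrix.of fun _ _ : Unit => c)).PosDef)
    (μq : Fin n → ℝ) (hμq : μq = c⁻¹ • b)
    (Vq : Matrix (Fin n) (Fin n) ℝ)
    (hVq : Vq = c⁻¹ • A - Matrix.vecMulVec μq μq)
    (s : ℝ) (hs : s = (c - b ⬝ᵥ (A⁻¹ *ᵥ b))⁻¹)
    (k : ℝ) (hk : k = 1 + (μq - ν) ⬝ᵥ (Vq⁻¹ *ᵥ μq)) :
    (s * (1 - ν ⬝ᵥ (A⁻¹ *ᵥ b))) • b = k • μq := by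
  -- A is symmetric
  have hAsymm : A.IsHermitian := by
    rw [hA]
    ext i j
    simp only [Matrix.conjTranspose_apply, Matrix.of_apply, star_trivial]
    exact congrArg (integral volume) (funext fun ω => by ring)
  -- c > 0
  have hc0 : 0 < c := by
    have hne : (Sum.elim (0 : Fin n → ℝ) (fun _ : Unit => (1:ℝ))) ≠ 0 := by
      intro h
      have := congrFun h (Sum.inr ())
      simp at this
    have := hF.dotProduct_mulVec_pos hne
    rw [star_trivial, quad_form_block] at this
    simpa using this
  -- A is positive definite
  have hApd : A.PosDef := by
    refine PosDef.of_dotProduct_mulVec_pos hAsymm fun y hy => ?_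
    have hne : (Sum.elim y (fun _ : Unit => (0:ℝ))) ≠ 0 := by
      intro h
      exact hy (funext fun i => congrFun h (Sum.inl i))
    have := hF.dotProduct_mulVec_pos hne
    rw [star_trivial, quad_form_block] at this
    simpa using this
  have hAdet : IsUnit A.det := isUnit_iff_ne_zero.2 hApd.det_pos.ne'
  have hw : A *ᵥ (A⁻¹ *ᵥ b) = b := by
    rw [mulVec_mulVec, mul_nonsing_inv _ hAdet, one_mulVec]
  set w : Fin n → ℝ := A⁻¹ *ᵥ b with hwdef
  set β : ℝ := b ⬝ᵥ w with hβ
  -- Schur complement positivity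
  have hsc : 0 < c - β := by
    have hne : (Sum.elim (-w) (fun _ : Unit => (1:ℝ))) ≠ 0 := by
      intro h
      have := congrFun h (Sum.inr ())
      simp at this
    have := hF.dotProduct_mulVec_pos hne
    rw [star_trivial, quad_form_block] at this
    simp only [mulVec_neg, hw, dotProduct_neg, neg_dotProduct, neg_neg, one_mul, one_pow,
      mul_one] at this
    rw [dotProduct_comm w b] at this
    linarith
  have hscne : c - β ≠ 0 := hsc.ne'
  have hcne : c ≠ 0 := hc0.ne'
  -- Vq is positive definite
  have hVqpd : Vq.PosDef := by
    refine PosDef.of_dotProduct_mulVec_pos ?_ ?_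
    · rw [hVq]
      show _ᴴ = _
      rw [conjTranspose_sub, conjTranspose_smul, hAsymm.eq]
      congr 1
      ext i j
      simp [vecMulVec_apply, conjTranspose_apply, mul_comm]
    · intro y hy
      set t : ℝ := -(c⁻¹ * (b ⬝ᵥ y)) with ht
      have hne : (Sum.elim y (fun _ : Unit => t)) ≠ 0 := by
        intro h
        exact hy (funext fun i => congrFun h (Sum.inl i))
      have hpos := hF.dotProduct_mulVec_pos hne
      rw [star_trivial, quad_form_block] at hpos
      rw [star_trivial]
      have hexp : y ⬝ᵥ (Vq *ᵥ y)
          = c⁻¹ * (y ⬝ᵥ (A *ᵥ y)) - (c⁻¹ * (b ⬝ᵥ y)) * (c⁻¹ * (y ⬝ᵥ b)) := by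
        rw [hVq, sub_mulVec, smul_mulVec, vecMulVec_mulVec', dotProduct_sub,
          dotProduct_smul, dotProduct_smul, hμq, smul_dotProduct, dotProduct_smul]
        simp only [smul_eq_mul]
      rw [dotProduct_comm y b] at hpos
      rw [dotProduct_comm y b] at hexp
      rw [hexp]
      have h3 : c⁻¹ * (y ⬝ᵥ A *ᵥ y + t * b ⬝ᵥ y + t * b ⬝ᵥ y + c * t ^ 2)
          = c⁻¹ * y ⬝ᵥ A *ᵥ y - c⁻¹ * b ⬝ᵥ y * (c⁻¹ * b ⬝ᵥ y) := by
        rw [ht]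
        field_simp
        ring
      have h4 := mul_pos (inv_pos.2 hc0) hpos
      rw [h3] at h4
      linarith
  have hVqdet : IsUnit Vq.det := isUnit_iff_ne_zero.2 hVqpd.det_pos.ne'
  -- key computation
  have h1 : Vq *ᵥ ((c * s) • w) = μq := by
    rw [hVq, sub_mulVec, smul_mulVec, vecMulVec_mulVec', mulVec_smul, hw]
    funext i
    simp only [Pi.sub_apply, Pi.smul_apply, smul_eq_mul, hμq, smul_dotProduct,
      dotProduct_smul]
    rw [hs]
    field_simp
    ring
  have hkey : Vq⁻¹ *ᵥ μq = (c * s) • w := by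
    rw [← h1, mulVec_mulVec, nonsing_inv_mul _ hVqdet, one_mulVec]
  rw [hk, hkey]
  funext i
  simp only [Pi.smul_apply, smul_eq_mul, hμq, dotProduct_smul, sub_dotProduct,
    smul_dotProduct]
  rw [hs]
  field_simp
  ring
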